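/- arXiv:2510.12312 — 2 statements merged into one kernel-verified Lean document; each statement's English description precedes it below -/
import Mathlib

section
/- Let M = ⟨S, A, P, R, γ⟩ be a finite MDP with γ ∈ [0,1), M̄ = ⟨S̄, A, P̄, R̄, γ⟩ a latent MDP over a finite metric space (S̄, d̄), φ : S → S̄ an encoder, π̄ a latent policy, and π_b a baseline policy with supp π_b(·|s) = supp π̄(·|φ(s)) for all s ∈ S. Let D = max{π̄(a|φ(s))/π_b(a|s) : s ∈ S, a ∈ supp π_b(·|s)} and assume γ·D < 1. Let ξ be a stationary distribution of π_b. Assume the latent model has Lipschitz constants K_R̄, K_P̄ under π̄ with γ·K_P̄ < 1, and set K_V = K_R̄/(1 − γ·K_P̄). Then Σ_s ξ(s)·|V^{π̄∘φ}(s) − V̄^{π̄}(φ(s))| ≤ (L_R + γ·K_V·L_P)/(1/D − γ), where L_R and L_P are the reward and transition losses with respect to ξ and π_b. -/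
open Finset

variable {S A SL : Type*} [Fintype S] [Fintype A] [Fintype SL]

/-- A (stationary, stochastic) policy. -/
def IsPolicy {X : Type*} [Fintype X] (π : X → A → ℝ) : Prop :=
  ∀ x, (∀ a, 0 ≤ π x a) ∧ (∑ a, π x a) = 1

/-- The Wasserstein distance between two distributions on a finite metric
space (infimum of the expected distance over all couplings). -/
noncomputable def Wass [MetricSpace SL] (μ ν : SL → ℝ) : ℝ :=
  sInf { c : ℝ | ∃ lam : SL × SL → ℝ, (∀ p, 0 ≤ lam p) ∧
    (∀ x, (∑ y, lam (x, y)) = μ x) ∧ (∀ y, (∑ x, lam (x, y)) = ν y) ∧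
    c = ∑ p : SL × SL, lam p * dist p.1 p.2 }

/-!
Subtracting the two Bellman equations bounds `|V s - V̄ (φ s)|` by an average under `π̄(·|φ s)` of
the one-step reward error, `γ K_V` times the one-step Wasserstein transition error (the easy half
of Kantorovich–Rubinstein, since `V̄` is `K_V`-Lipschitz), and `γ` times the expected error at the
next state. That `V̄` is `K_V`-Lipschitz comes from the latent Bellman equation, which improves any
Lipschitz constant `L` of `V̄` to `K_R + γ K_P L`. Passing from `π̄` to `π_b` costs the factor `D`,
and stationarity of `ξ` turns the next-state term back into the left-hand side `X`, so that
`X ≤ D (L_R + γ K_V L_P + γ X)`.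
-/

def IsProbDist {X : Type*} [Fintype X] (μ : X → ℝ) : Prop :=
  (∀ x, 0 ≤ μ x) ∧ ∑ x, μ x = 1

lemma IsProbDist.mixture {ι X : Type*} [Fintype ι] [Fintype X] {π : ι → ℝ} {P : ι → X → ℝ}
    (hπ : IsProbDist π) (hP : ∀ i, IsProbDist (P i)) :
    IsProbDist (fun x => ∑ i, π i * P i x) := by
  refine ⟨fun x => sum_nonneg fun i _ => mul_nonneg (hπ.1 i) ((hP i).1 x), ?_⟩
  rw [sum_comm]
  simp only [← mul_sum, (hP _).2, mul_one, hπ.2]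

def pushforward [DecidableEq SL] (φ : S → SL) (μ : S → ℝ) (x : SL) : ℝ :=
  ∑ s, if φ s = x then μ s else 0

lemma sum_pushforward_mul [DecidableEq SL] (φ : S → SL) (μ : S → ℝ) (f : SL → ℝ) :
    ∑ x, pushforward φ μ x * f x = ∑ s, μ s * f (φ s) := by
  simp only [pushforward, sum_mul, ite_mul, zero_mul]
  rw [sum_comm]
  simp

lemma IsProbDist.pushforward [DecidableEq SL] {μ : S → ℝ} (hμ : IsProbDist μ) (φ : S → SL) :
    IsProbDist (pushforward φ μ) := by
  refine ⟨fun x => sum_nonneg fun s _ => ?_, ?_⟩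
  · split_ifs
    exacts [hμ.1 s, le_rfl]
  · simpa [hμ.2] using sum_pushforward_mul φ μ 1

lemma sum_mul_bellman {ι X : Type*} [Fintype ι] [Fintype X] (π r : ι → ℝ) (P : ι → X → ℝ)
    (γ : ℝ) (v : X → ℝ) :
    ∑ i, π i * (r i + γ * ∑ x, P i x * v x)
      = ∑ i, π i * r i + γ * ∑ x, (∑ i, π i * P i x) * v x := by
  simp only [mul_add, sum_add_distrib, mul_sum, sum_mul]
  rw [sum_comm (s := univ (α := X))]
  congr 1
  exact sum_congr rfl fun i _ => sum_congr rfl fun x _ => by ring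

section Wasserstein

variable {X : Type*} [Fintype X] [MetricSpace X]

def couplingCosts (μ ν : X → ℝ) : Set ℝ :=
  { c : ℝ | ∃ lam : X × X → ℝ, (∀ p, 0 ≤ lam p) ∧
    (∀ x, (∑ y, lam (x, y)) = μ x) ∧ (∀ y, (∑ x, lam (x, y)) = ν y) ∧
    c = ∑ p : X × X, lam p * dist p.1 p.2 }

lemma nonneg_of_mem_couplingCosts {μ ν : X → ℝ} {c : ℝ} (hc : c ∈ couplingCosts μ ν) :
    0 ≤ c := by
  obtain ⟨lam, hlam, -, -, rfl⟩ := hc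
  exact sum_nonneg fun p _ => mul_nonneg (hlam p) dist_nonneg

lemma couplingCosts_nonempty {μ ν : X → ℝ} (hμ : IsProbDist μ) (hν : IsProbDist ν) :
    (couplingCosts μ ν).Nonempty := by
  refine ⟨_, fun p => μ p.1 * ν p.2, fun p => mul_nonneg (hμ.1 p.1) (hν.1 p.2), ?_, ?_, rfl⟩
  · intro x; simp only [← mul_sum, hν.2, mul_one]
  · intro y; simp only [← sum_mul, hμ.2, one_mul]

lemma Wass_nonneg (μ ν : X → ℝ) : 0 ≤ Wass μ ν :=
  Real.sInf_nonneg fun _ hc => nonneg_of_mem_couplingCosts hc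

lemma Wass_le_of_mem_couplingCosts {μ ν : X → ℝ} {c : ℝ} (hc : c ∈ couplingCosts μ ν) :
    Wass μ ν ≤ c :=
  csInf_le ⟨0, fun _ => nonneg_of_mem_couplingCosts⟩ hc

variable {f : X → ℝ} {L : ℝ}

lemma abs_sum_mul_sub_le_of_mem_couplingCosts (hf : ∀ x y, |f x - f y| ≤ L * dist x y)
    {μ ν : X → ℝ} {c : ℝ} (hc : c ∈ couplingCosts μ ν) :
    |∑ x, μ x * f x - ∑ y, ν y * f y| ≤ L * c := by
  obtain ⟨lam, hlam, hfst, hsnd, rfl⟩ := hc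
  have hμ : ∑ x, μ x * f x = ∑ p : X × X, lam p * f p.1 := by
    simp only [← hfst, sum_mul, Fintype.sum_prod_type]
  have hν : ∑ y, ν y * f y = ∑ p : X × X, lam p * f p.2 := by
    simp only [← hsnd, sum_mul, Fintype.sum_prod_type]
    exact sum_comm
  rw [hμ, hν, ← sum_sub_distrib, mul_sum]
  refine (abs_sum_le_sum_abs _ _).trans (sum_le_sum fun p _ => ?_)
  rw [← mul_sub, abs_mul, abs_of_nonneg (hlam p), mul_left_comm]
  exact mul_le_mul_of_nonneg_left (hf p.1 p.2) (hlam p)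

/-- The easy half of Kantorovich–Rubinstein duality. -/
lemma abs_sum_mul_sub_le_mul_Wass (hf : ∀ x y, |f x - f y| ≤ L * dist x y)
    {μ ν : X → ℝ} (hμ : IsProbDist μ) (hν : IsProbDist ν) :
    |∑ x, μ x * f x - ∑ y, ν y * f y| ≤ L * Wass μ ν := by
  obtain ⟨c₀, hc₀⟩ := couplingCosts_nonempty hμ hν
  rcases le_or_gt L 0 with hL | hL
  · exact (abs_sum_mul_sub_le_of_mem_couplingCosts hf hc₀).trans
      (mul_le_mul_of_nonpos_left (Wass_le_of_mem_couplingCosts hc₀) hL)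
  · rw [mul_comm, ← div_le_iff₀ hL]
    refine le_csInf ⟨c₀, hc₀⟩ fun c hc => ?_
    rw [div_le_iff₀ hL, mul_comm]
    exact abs_sum_mul_sub_le_of_mem_couplingCosts hf hc

end Wasserstein

/-- Apply the hypothesis to the best Lipschitz constant, which exists as `X` is finite. -/
lemma lipschitz_of_forall_lipschitz_improves {X : Type*} [Finite X] [MetricSpace X] {f : X → ℝ}
    {a b : ℝ} (hb : b < 1)
    (himp : ∀ L, 0 ≤ L → (∀ x y, |f x - f y| ≤ L * dist x y) →
      ∀ x y, |f x - f y| ≤ (a + b * L) * dist x y)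
    (x y : X) : |f x - f y| ≤ a / (1 - b) * dist x y := by
  rcases eq_or_ne x y with rfl | hxy
  · simp
  have : Nonempty X := ⟨x⟩
  set L := ⨆ p : X × X, |f p.1 - f p.2| / dist p.1 p.2
  have hbdd := (Set.finite_range fun p : X × X => |f p.1 - f p.2| / dist p.1 p.2).bddAbove
  have hL0 : 0 ≤ L := Real.iSup_nonneg fun p => div_nonneg (abs_nonneg _) dist_nonneg
  have hLip : ∀ u v, |f u - f v| ≤ L * dist u v := by
    intro u v
    rcases eq_or_ne u v with rfl | huv
    · simp
    · rw [← div_le_iff₀ (dist_pos.2 huv)]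
      exact le_ciSup hbdd (u, v)
  have hLa : L ≤ a + b * L := by
    have hc : 0 ≤ a + b * L := by
      nlinarith [himp L hL0 hLip x y, abs_nonneg (f x - f y), dist_pos.2 hxy]
    exact ciSup_le fun p => div_le_of_le_mul₀ dist_nonneg hc (himp L hL0 hLip p.1 p.2)
  have hLab : L ≤ a / (1 - b) := by
    rw [le_div_iff₀ (by linarith)]
    linarith
  exact (hLip x y).trans (mul_le_mul_of_nonneg_right hLab dist_nonneg)

lemma abs_sum_mul_sub_sum_mul_le {ι : Type*} (s : Finset ι) {w : ι → ℝ} (hw : ∀ i, 0 ≤ w i)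
    (u v : ι → ℝ) :
    |∑ i ∈ s, w i * u i - ∑ i ∈ s, w i * v i| ≤ ∑ i ∈ s, w i * |u i - v i| := by
  rw [← sum_sub_distrib]
  refine (abs_sum_le_sum_abs _ _).trans (sum_le_sum fun i _ => ?_)
  rw [← mul_sub, abs_mul, abs_of_nonneg (hw i)]

lemma abs_add_mul_sub_add_mul_le {γ : ℝ} (hγ : 0 ≤ γ) (r₁ r₂ t₁ t₂ : ℝ) :
    |r₁ + γ * t₁ - (r₂ + γ * t₂)| ≤ |r₁ - r₂| + γ * |t₁ - t₂| := by
  rw [show r₁ + γ * t₁ - (r₂ + γ * t₂) = (r₁ - r₂) + γ * (t₁ - t₂) by ring]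
  refine (abs_add_le _ _).trans_eq ?_
  rw [abs_mul, abs_of_nonneg hγ]

section LatentValue

variable [MetricSpace SL] {Pbar : SL → A → SL → ℝ} {Rbar : SL → A → ℝ} {πbar : SL → A → ℝ}
  {Vbar : SL → ℝ} {γ KR KP : ℝ}

lemma latentValue_lipschitz_improves (hPbar : ∀ x a, IsProbDist (Pbar x a))
    (hπbar : IsPolicy πbar) (hγ : 0 ≤ γ)
    (hLipR : ∀ x₁ x₂ : SL,
      |(∑ a, πbar x₁ a * Rbar x₁ a) - (∑ a, πbar x₂ a * Rbar x₂ a)| ≤ KR * dist x₁ x₂)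
    (hLipP : ∀ x₁ x₂ : SL,
      Wass (fun x' => ∑ a, πbar x₁ a * Pbar x₁ a x')
        (fun x' => ∑ a, πbar x₂ a * Pbar x₂ a x') ≤ KP * dist x₁ x₂)
    (hVbar : ∀ x, Vbar x = ∑ a, πbar x a * (Rbar x a + γ * ∑ x', Pbar x a x' * Vbar x'))
    {L : ℝ} (hL : 0 ≤ L) (hVbarL : ∀ x y, |Vbar x - Vbar y| ≤ L * dist x y) (x y : SL) :
    |Vbar x - Vbar y| ≤ (KR + γ * KP * L) * dist x y := by
  have hμ : ∀ x, IsProbDist fun x' => ∑ a, πbar x a * Pbar x a x' :=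
    fun x => IsProbDist.mixture (hπbar x) (hPbar x)
  have hexpect := (abs_sum_mul_sub_le_mul_Wass hVbarL (hμ x) (hμ y)).trans
    (mul_le_mul_of_nonneg_left (hLipP x y) hL)
  rw [hVbar x, hVbar y, sum_mul_bellman, sum_mul_bellman]
  calc _ ≤ _ := abs_add_mul_sub_add_mul_le hγ _ _ _ _
    _ ≤ KR * dist x y + γ * (L * (KP * dist x y)) :=
      add_le_add (hLipR x y) (mul_le_mul_of_nonneg_left hexpect hγ)
    _ = (KR + γ * KP * L) * dist x y := by ring

lemma latentValue_lipschitz (hPbar : ∀ x a, IsProbDist (Pbar x a))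
    (hπbar : IsPolicy πbar) (hγ : 0 ≤ γ) (hγKP : γ * KP < 1)
    (hLipR : ∀ x₁ x₂ : SL,
      |(∑ a, πbar x₁ a * Rbar x₁ a) - (∑ a, πbar x₂ a * Rbar x₂ a)| ≤ KR * dist x₁ x₂)
    (hLipP : ∀ x₁ x₂ : SL,
      Wass (fun x' => ∑ a, πbar x₁ a * Pbar x₁ a x')
        (fun x' => ∑ a, πbar x₂ a * Pbar x₂ a x') ≤ KP * dist x₁ x₂)
    (hVbar : ∀ x, Vbar x = ∑ a, πbar x a * (Rbar x a + γ * ∑ x', Pbar x a x' * Vbar x'))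
    (x y : SL) : |Vbar x - Vbar y| ≤ KR / (1 - γ * KP) * dist x y :=
  lipschitz_of_forall_lipschitz_improves hγKP
    (fun _ hL hVbarL => latentValue_lipschitz_improves hPbar hπbar hγ hLipR hLipP hVbar hL hVbarL)
    x y

variable [DecidableEq SL] {P : S → A → S → ℝ} {R : S → A → ℝ} {φ : S → SL} {V : S → ℝ} {KV : ℝ}

lemma abs_value_sub_latentValue_le (hP : ∀ s a, IsProbDist (P s a))
    (hPbar : ∀ x a, IsProbDist (Pbar x a)) (hπbar : IsPolicy πbar) (hγ : 0 ≤ γ)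
    (hVbarLip : ∀ x y, |Vbar x - Vbar y| ≤ KV * dist x y)
    (hV : ∀ s, V s = ∑ a, πbar (φ s) a * (R s a + γ * ∑ s', P s a s' * V s'))
    (hVbar : ∀ x, Vbar x = ∑ a, πbar x a * (Rbar x a + γ * ∑ x', Pbar x a x' * Vbar x'))
    (s : S) :
    |V s - Vbar (φ s)| ≤ ∑ a, πbar (φ s) a * (|R s a - Rbar (φ s) a|
      + γ * KV * Wass (pushforward φ (P s a)) (Pbar (φ s) a)
      + γ * ∑ s', P s a s' * |V s' - Vbar (φ s')|) := by
  rw [hV s, hVbar (φ s)]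
  refine (abs_sum_mul_sub_sum_mul_le _ (hπbar (φ s)).1 _ _).trans
    (sum_le_sum fun a _ => mul_le_mul_of_nonneg_left ?_ ((hπbar (φ s)).1 a))
  have hexpect : |∑ s', P s a s' * V s' - ∑ x', Pbar (φ s) a x' * Vbar x'|
      ≤ ∑ s', P s a s' * |V s' - Vbar (φ s')|
        + KV * Wass (pushforward φ (P s a)) (Pbar (φ s) a) := by
    refine (abs_sub_le _ (∑ s', P s a s' * Vbar (φ s')) _).trans (add_le_add
      (abs_sum_mul_sub_sum_mul_le _ (hP s a).1 _ _) ?_)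
    rw [← sum_pushforward_mul]
    exact abs_sum_mul_sub_le_mul_Wass hVbarLip ((hP s a).pushforward φ) (hPbar (φ s) a)
  calc _ ≤ _ := abs_add_mul_sub_add_mul_le hγ _ _ _ _
    _ ≤ |R s a - Rbar (φ s) a| + γ * (∑ s', P s a s' * |V s' - Vbar (φ s')|
        + KV * Wass (pushforward φ (P s a)) (Pbar (φ s) a)) := by gcongr
    _ = _ := by ring

end LatentValue

lemma sup'_div_pos {ι : Type*} [Fintype ι] {π π' : ι → ℝ} (hsupp : ∀ i, 0 < π i → 0 < π' i)
    (hne : (univ.filter fun i => 0 < π i).Nonempty) :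
    0 < (univ.filter fun i => 0 < π i).sup' hne (fun i => π' i / π i) := by
  obtain ⟨i, hi⟩ := hne
  have hπi := (mem_filter.1 hi).2
  exact (div_pos (hsupp i hπi) hπi).trans_le (le_sup' (fun i => π' i / π i) hi)

lemma le_sup'_div_mul {ι : Type*} [Fintype ι] {π π' : ι → ℝ} (hπ : ∀ i, 0 ≤ π i)
    (hsupp : ∀ i, 0 < π' i → 0 < π i) (hne : (univ.filter fun i => 0 < π i).Nonempty) (i : ι) :
    π' i ≤ (univ.filter fun i => 0 < π i).sup' hne (fun i => π' i / π i) * π i := by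
  rcases (hπ i).eq_or_lt with hπi | hπi
  · rw [← hπi, mul_zero]
    exact not_lt.1 fun h => (hsupp i h).ne hπi
  · rw [← div_le_iff₀ hπi]
    exact le_sup' (fun i => π' i / π i) (mem_filter.2 ⟨mem_univ i, hπi⟩)

lemma sum_mul_sum_mul_le_of_le_mul {ξ : S → ℝ} {π π' c : S → A → ℝ} {D : ℝ}
    (hξ : ∀ s, 0 ≤ ξ s) (hc : ∀ s a, 0 ≤ c s a) (hdom : ∀ s a, π' s a ≤ D * π s a) :
    ∑ s, ξ s * ∑ a, π' s a * c s a ≤ D * ∑ s, ∑ a, ξ s * π s a * c s a := by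
  simp only [mul_sum]
  refine sum_le_sum fun s _ => sum_le_sum fun a _ => ?_
  calc ξ s * (π' s a * c s a) = π' s a * (ξ s * c s a) := by ring
    _ ≤ D * π s a * (ξ s * c s a) :=
      mul_le_mul_of_nonneg_right (hdom s a) (mul_nonneg (hξ s) (hc s a))
    _ = D * (ξ s * π s a * c s a) := by ring

lemma sum_sum_mul_sum_eq_of_stationary {ξ : S → ℝ} {π : S → A → ℝ} {P : S → A → S → ℝ}
    (hstat : ∀ s', ∑ s, ∑ a, ξ s * π s a * P s a s' = ξ s') (g : S → ℝ) :
    ∑ s, ∑ a, ξ s * π s a * ∑ s', P s a s' * g s' = ∑ s, ξ s * g s := by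
  calc ∑ s, ∑ a, ξ s * π s a * ∑ s', P s a s' * g s'
      = ∑ s, ∑ a, ∑ s', ξ s * π s a * P s a s' * g s' := by simp only [mul_sum, mul_assoc]
    _ = ∑ s', ∑ s, ∑ a, ξ s * π s a * P s a s' * g s' :=
      (sum_congr rfl fun s _ => sum_comm).trans sum_comm
    _ = ∑ s', ξ s' * g s' := by simp only [← sum_mul, hstat]

lemma le_div_inv_sub_of_le_mul_add {x C D γ : ℝ} (hD : 0 < D) (hγD : γ * D < 1)
    (h : x ≤ D * (C + γ * x)) : x ≤ C / (1 / D - γ) := by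
  have hpos : 0 < 1 / D - γ := by
    rw [one_div, sub_pos, ← mul_lt_mul_iff_of_pos_right hD, inv_mul_cancel₀ hD.ne']
    exact hγD
  rw [le_div_iff₀ hpos]
  field_simp
  linarith

theorem average_value_difference_bound_general
    [MetricSpace SL] [DecidableEq SL]
    (P : S → A → S → ℝ)
    (hP : ∀ s a, (∀ s', 0 ≤ P s a s') ∧ (∑ s', P s a s') = 1)
    (R : S → A → ℝ) (γ : ℝ) (hγ : 0 ≤ γ ∧ γ < 1)
    (Pbar : SL → A → SL → ℝ)
    (hPbar : ∀ x a, (∀ x', 0 ≤ Pbar x a x') ∧ (∑ x', Pbar x a x') = 1)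
    (Rbar : SL → A → ℝ)
    (φ : S → SL)
    (πbar : SL → A → ℝ) (hπbar : IsPolicy πbar)
    (πb : S → A → ℝ) (hπb : IsPolicy πb)
    (hsupp : ∀ s a, (0 < πb s a ↔ 0 < πbar (φ s) a))
    (hne : ((Finset.univ : Finset (S × A)).filter (fun p => 0 < πb p.1 p.2)).Nonempty)
    (D : ℝ)
    (hD : D = ((Finset.univ : Finset (S × A)).filter (fun p => 0 < πb p.1 p.2)).sup' hne
      (fun p => πbar (φ p.1) p.2 / πb p.1 p.2))
    (hγD : γ * D < 1)
    (ξ : S → ℝ) (hξ : (∀ s, 0 ≤ ξ s) ∧ (∑ s, ξ s) = 1)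
    (hstat : ∀ s', (∑ s, ∑ a, ξ s * πb s a * P s a s') = ξ s')
    (KR KP : ℝ) (hKR0 : 0 ≤ KR) (hγKP : γ * KP < 1)
    (hLipR : ∀ x₁ x₂ : SL,
      |(∑ a, πbar x₁ a * Rbar x₁ a) - (∑ a, πbar x₂ a * Rbar x₂ a)| ≤ KR * dist x₁ x₂)
    (hLipP : ∀ x₁ x₂ : SL,
      Wass (fun x' => ∑ a, πbar x₁ a * Pbar x₁ a x')
        (fun x' => ∑ a, πbar x₂ a * Pbar x₂ a x') ≤ KP * dist x₁ x₂)
    (KV : ℝ) (hKV : KV = KR / (1 - γ * KP))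
    (V : S → ℝ)
    (hV : ∀ s, V s = ∑ a, πbar (φ s) a * (R s a + γ * ∑ s', P s a s' * V s'))
    (Vbar : SL → ℝ)
    (hVbar : ∀ x, Vbar x = ∑ a, πbar x a * (Rbar x a + γ * ∑ x', Pbar x a x' * Vbar x'))
    (LR LP : ℝ)
    (hLR : LR = ∑ s, ∑ a, ξ s * πb s a * |R s a - Rbar (φ s) a|)
    (hLP : LP = ∑ s, ∑ a, ξ s * πb s a *
      Wass (fun x => ∑ s', if φ s' = x then P s a s' else 0) (Pbar (φ s) a)) :
    (∑ s, ξ s * |V s - Vbar (φ s)|) ≤ (LR + γ * KV * LP) / (1 / D - γ) := by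
  obtain ⟨hγ0, hγ1⟩ := hγ
  have hKV0 : 0 ≤ KV := hKV ▸ div_nonneg hKR0 (by linarith)
  have hVbarLip : ∀ x y, |Vbar x - Vbar y| ≤ KV * dist x y :=
    hKV ▸ latentValue_lipschitz hPbar hπbar hγ0 hγKP hLipR hLipP hVbar
  have hD0 : 0 < D := hD ▸ sup'_div_pos (fun p : S × A => (hsupp p.1 p.2).1) hne
  have hdom : ∀ s a, πbar (φ s) a ≤ D * πb s a := fun s a => by
    rw [hD]
    exact le_sup'_div_mul (fun p => (hπb p.1).1 p.2) (fun p => (hsupp p.1 p.2).2) hne (s, a)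
  set c : S → A → ℝ := fun s a => |R s a - Rbar (φ s) a|
    + γ * KV * Wass (pushforward φ (P s a)) (Pbar (φ s) a)
    + γ * ∑ s', P s a s' * |V s' - Vbar (φ s')| with hc_def
  have hc : ∀ s a, 0 ≤ c s a := fun s a =>
    add_nonneg (add_nonneg (abs_nonneg _) (mul_nonneg (mul_nonneg hγ0 hKV0) (Wass_nonneg _ _)))
      (mul_nonneg hγ0 (sum_nonneg fun s' _ => mul_nonneg ((hP s a).1 s') (abs_nonneg _)))
  have hLP' : LP = ∑ s, ∑ a, ξ s * πb s a * Wass (pushforward φ (P s a)) (Pbar (φ s) a) := hLP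
  have hlosses : ∑ s, ∑ a, ξ s * πb s a * c s a
      = LR + γ * KV * LP + γ * ∑ s, ξ s * |V s - Vbar (φ s)| := by
    rw [hLR, hLP', ← sum_sum_mul_sum_eq_of_stationary hstat, mul_sum, mul_sum,
      ← sum_add_distrib, ← sum_add_distrib]
    refine sum_congr rfl fun s _ => ?_
    rw [mul_sum, mul_sum, ← sum_add_distrib, ← sum_add_distrib]
    exact sum_congr rfl fun a _ => by ring
  refine le_div_inv_sub_of_le_mul_add hD0 hγD ?_
  calc ∑ s, ξ s * |V s - Vbar (φ s)| ≤ ∑ s, ξ s * ∑ a, πbar (φ s) a * c s a :=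
        sum_le_sum fun s _ => mul_le_mul_of_nonneg_left
          (abs_value_sub_latentValue_le hP hPbar hπbar hγ0 hVbarLip hV hVbar s) (hξ.1 s)
    _ ≤ D * ∑ s, ∑ a, ξ s * πb s a * c s a := sum_mul_sum_mul_le_of_le_mul hξ.1 hc hdom
    _ = D * (LR + γ * KV * LP + γ * ∑ s, ξ s * |V s - Vbar (φ s)|) := by rw [hlosses]

/-- the expected (under a stationary distribution of the baseline
policy) absolute difference between the value of `π̄∘φ` in the environment and
the latent value of `π̄` in the world model is bounded by the reward and
transition losses scaled by `1/(1/D − γ)`. -/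
theorem average_value_difference_bound
    [Nonempty S] [Nonempty A] [Nonempty SL] [MetricSpace SL] [DecidableEq SL]
    (P : S → A → S → ℝ)
    (hP : ∀ s a, (∀ s', 0 ≤ P s a s') ∧ (∑ s', P s a s') = 1)
    (R : S → A → ℝ) (γ : ℝ) (hγ : 0 ≤ γ ∧ γ < 1)
    (Pbar : SL → A → SL → ℝ)
    (hPbar : ∀ x a, (∀ x', 0 ≤ Pbar x a x') ∧ (∑ x', Pbar x a x') = 1)
    (Rbar : SL → A → ℝ)
    (φ : S → SL)
    (πbar : SL → A → ℝ) (hπbar : IsPolicy πbar)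
    (πb : S → A → ℝ) (hπb : IsPolicy πb)
    (hsupp : ∀ s a, (0 < πb s a ↔ 0 < πbar (φ s) a))
    (hne : ((Finset.univ : Finset (S × A)).filter (fun p => 0 < πb p.1 p.2)).Nonempty)
    (D : ℝ)
    (hD : D = ((Finset.univ : Finset (S × A)).filter (fun p => 0 < πb p.1 p.2)).sup' hne
      (fun p => πbar (φ p.1) p.2 / πb p.1 p.2))
    (hγD : γ * D < 1)
    (ξ : S → ℝ) (hξ : (∀ s, 0 ≤ ξ s) ∧ (∑ s, ξ s) = 1)
    (hstat : ∀ s', (∑ s, ∑ a, ξ s * πb s a * P s a s') = ξ s')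
    (KR KP : ℝ) (hKR0 : 0 ≤ KR) (hKP0 : 0 ≤ KP) (hγKP : γ * KP < 1)
    (hLipR : ∀ x₁ x₂ : SL,
      |(∑ a, πbar x₁ a * Rbar x₁ a) - (∑ a, πbar x₂ a * Rbar x₂ a)| ≤ KR * dist x₁ x₂)
    (hLipP : ∀ x₁ x₂ : SL,
      Wass (fun x' => ∑ a, πbar x₁ a * Pbar x₁ a x')
        (fun x' => ∑ a, πbar x₂ a * Pbar x₂ a x') ≤ KP * dist x₁ x₂)
    (KV : ℝ) (hKV : KV = KR / (1 - γ * KP))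
    (V : S → ℝ)
    (hV : ∀ s, V s = ∑ a, πbar (φ s) a * (R s a + γ * ∑ s', P s a s' * V s'))
    (Vbar : SL → ℝ)
    (hVbar : ∀ x, Vbar x = ∑ a, πbar x a * (Rbar x a + γ * ∑ x', Pbar x a x' * Vbar x'))
    (LR LP : ℝ)
    (hLR : LR = ∑ s, ∑ a, ξ s * πb s a * |R s a - Rbar (φ s) a|)
    (hLP : LP = ∑ s, ∑ a, ξ s * πb s a *
      Wass (fun x => ∑ s', if φ s' = x then P s a s' else 0) (Pbar (φ s) a)) :
    (∑ s, ξ s * |V s - Vbar (φ s)|) ≤ (LR + γ * KV * LP) / (1 / D - γ) :=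
  average_value_difference_bound_general P hP R γ hγ Pbar hPbar Rbar φ πbar hπbar πb hπb hsupp hne D
    hD hγD ξ hξ hstat KR KP hKR0 hγKP hLipR hLipP KV hKV V hV Vbar hVbar LR LP hLR hLP
end

section
/- Let M = ⟨S, A, P, R, γ⟩ be a finite MDP with 1/2 < γ < 1, M̄ = ⟨S̄, A, P̄, R̄, γ⟩ a latent MDP over a finite metric space (S̄, d̄), φ : S → S̄ an encoder, π̄ and π̄_b latent policies, and let the baseline policy be π_b = π̄_b∘φ. Let C ∈ (1, 1/γ) and assume π̄∘φ ∈ N^C(π_b); let D = max{π̄(a|φ(s))/π_b(a|s) : s ∈ S, a ∈ supp π_b(·|s)}. Assume M and M̄ are episodic with initial state s_I, reset state s_reset, latent initial state s̄_I = φ(s_I) and latent reset state s̄_reset = φ(s_reset). Let ξ be a stationary distribution of π_b with ξ(s_reset) > 0. Assume the latent model has Lipschitz constants K_R̄, K_P̄ both under π̄ and under π̄_b, with K_P̄ < 1/γ, and set K_V = K_R̄/(1 − γ·K_P̄). Then J(π̄∘φ) − J(π_b) ≥ J̄(π̄) − J̄(π̄_b) − ζ, where ζ = (1/ξ(s_reset))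 · (L_R/γ + K_V·L_P) · (1/(1/D − γ) + 1/(1 − γ)) and L_R, L_P are the reward and transition losses with respect to ξ and π_b. -/
open Finset

variable {S A SL : Type*} [Fintype S] [Fintype A] [Fintype SL]

/-- The neighborhood `N^C(π)`. -/
def InNbhd (C : ℝ) (π π' : S → A → ℝ) : Prop :=
  IsPolicy π' ∧ (∀ s a, (0 < π s a ↔ 0 < π' s a)) ∧
    ∀ s a, 0 < π s a → (2 - C ≤ π' s a / π s a ∧ π' s a / π s a ≤ C)

lemma wass_nonneg [MetricSpace SL] (μ ν : SL → ℝ) : 0 ≤ Wass μ ν := by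
  apply Real.sInf_nonneg
  rintro c ⟨lam, hl0, -, -, rfl⟩
  exact Finset.sum_nonneg fun p _ => mul_nonneg (hl0 p) dist_nonneg

lemma wass_dual [MetricSpace SL] (μ ν : SL → ℝ)
    (hμ0 : ∀ x, 0 ≤ μ x) (hμ1 : ∑ x, μ x = 1)
    (hν0 : ∀ x, 0 ≤ ν x) (hν1 : ∑ x, ν x = 1)
    (f : SL → ℝ) (L : ℝ) (hL : 0 ≤ L)
    (hf : ∀ x y, |f x - f y| ≤ L * dist x y) :
    |(∑ x, μ x * f x) - ∑ y, ν y * f y| ≤ L * Wass μ ν := by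
  set Sset := { c : ℝ | ∃ lam : SL × SL → ℝ, (∀ p, 0 ≤ lam p) ∧
    (∀ x, (∑ y, lam (x, y)) = μ x) ∧ (∀ y, (∑ x, lam (x, y)) = ν y) ∧
    c = ∑ p : SL × SL, lam p * dist p.1 p.2 } with hSset
  have hne : Sset.Nonempty := by
    refine ⟨∑ p : SL × SL, (μ p.1 * ν p.2) * dist p.1 p.2,
      fun p => μ p.1 * ν p.2, fun p => mul_nonneg (hμ0 _) (hν0 _), ?_, ?_, rfl⟩
    · intro x; show ∑ y, μ x * ν y = μ x; rw [← Finset.mul_sum, hν1, mul_one]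
    · intro y; show ∑ x, μ x * ν y = ν y; rw [← Finset.sum_mul, hμ1, one_mul]
  have hbound : ∀ c ∈ Sset, |(∑ x, μ x * f x) - ∑ y, ν y * f y| ≤ L * c := by
    rintro c ⟨lam, hl0, hlx, hly, rfl⟩
    have h1 : (∑ x, μ x * f x) = ∑ p : SL × SL, lam p * f p.1 := by
      rw [Fintype.sum_prod_type]
      refine Finset.sum_congr rfl fun x _ => ?_
      rw [← hlx x, Finset.sum_mul]
    have h2 : (∑ y, ν y * f y) = ∑ p : SL × SL, lam p * f p.2 := by
      rw [Fintype.sum_prod_type_right]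
      refine Finset.sum_congr rfl fun y _ => ?_
      rw [← hly y, Finset.sum_mul]
    rw [h1, h2, ← Finset.sum_sub_distrib]
    calc |∑ p : SL × SL, (lam p * f p.1 - lam p * f p.2)|
        ≤ ∑ p : SL × SL, |lam p * f p.1 - lam p * f p.2| := Finset.abs_sum_le_sum_abs _ _
      _ ≤ ∑ p : SL × SL, lam p * (L * dist p.1 p.2) := by
          refine Finset.sum_le_sum fun p _ => ?_
          rw [← mul_sub, abs_mul, abs_of_nonneg (hl0 p)]
          exact mul_le_mul_of_nonneg_left (hf _ _) (hl0 p)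
      _ = L * ∑ p : SL × SL, lam p * dist p.1 p.2 := by
          rw [Finset.mul_sum]; exact Finset.sum_congr rfl fun p _ => by ring
  rcases hL.eq_or_lt with hL0 | hL0
  · obtain ⟨c, hc⟩ := hne
    have := hbound c hc
    rw [← hL0] at this ⊢
    simpa using this
  · rw [← div_le_iff₀' hL0]
    exact le_csInf hne fun c hc => (div_le_iff₀' hL0).2 (hbound c hc)

lemma value_lipschitz [MetricSpace SL]
    (Pbar : SL → A → SL → ℝ)
    (hPbar : ∀ x a, (∀ x', 0 ≤ Pbar x a x') ∧ (∑ x', Pbar x a x') = 1)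
    (Rbar : SL → A → ℝ) (γ : ℝ) (hγ0 : 0 < γ)
    (ρ : SL → A → ℝ) (hρ : ∀ x, (∀ a, 0 ≤ ρ x a) ∧ (∑ a, ρ x a) = 1)
    (KR KP : ℝ) (hKR0 : 0 ≤ KR) (hKPγ : γ * KP < 1)
    (hLipR : ∀ x₁ x₂ : SL,
      |(∑ a, ρ x₁ a * Rbar x₁ a) - (∑ a, ρ x₂ a * Rbar x₂ a)| ≤ KR * dist x₁ x₂)
    (hLipP : ∀ x₁ x₂ : SL,
      Wass (fun x' => ∑ a, ρ x₁ a * Pbar x₁ a x')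
        (fun x' => ∑ a, ρ x₂ a * Pbar x₂ a x') ≤ KP * dist x₁ x₂)
    (Wbar : SL → ℝ)
    (hWbar : ∀ x, Wbar x = ∑ a, ρ x a * (Rbar x a + γ * ∑ x', Pbar x a x' * Wbar x')) :
    ∀ x y, |Wbar x - Wbar y| ≤ (KR / (1 - γ * KP)) * dist x y := by
  classical
  have hden : 0 < 1 - γ * KP := by linarith
  -- mixed transition is a distribution
  have hmix0 : ∀ x : SL, ∀ x', 0 ≤ ∑ a, ρ x a * Pbar x a x' := fun x x' =>
    Finset.sum_nonneg fun a _ => mul_nonneg ((hρ x).1 a) ((hPbar x a).1 x')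
  have hmix1 : ∀ x : SL, ∑ x', ∑ a, ρ x a * Pbar x a x' = 1 := by
    intro x
    rw [Finset.sum_comm]
    calc ∑ a, ∑ x', ρ x a * Pbar x a x' = ∑ a, ρ x a := by
          refine Finset.sum_congr rfl fun a _ => ?_
          rw [← Finset.mul_sum, (hPbar x a).2, mul_one]
      _ = 1 := (hρ x).2
  -- decomposition of Wbar
  have hdec : ∀ x : SL, Wbar x = (∑ a, ρ x a * Rbar x a)
      + γ * ∑ x', (∑ a, ρ x a * Pbar x a x') * Wbar x' := by
    intro x
    rw [hWbar x]
    have h1 : ∀ a ∈ (univ : Finset A), ρ x a * (Rbar x a + γ * ∑ x', Pbar x a x' * Wbar x')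
        = ρ x a * Rbar x a + γ * ∑ x', ρ x a * Pbar x a x' * Wbar x' := by
      intro a _
      rw [mul_add, mul_left_comm, Finset.mul_sum]
      simp [mul_assoc]
    rw [Finset.sum_congr rfl h1, Finset.sum_add_distrib, ← Finset.mul_sum, Finset.sum_comm]
    congr 1
    rw [Finset.mul_sum, Finset.mul_sum]
    exact Finset.sum_congr rfl fun x' _ => by rw [Finset.sum_mul]
  -- the one-step contraction estimate, given a Lipschitz bound on Wbar
  have hstep : ∀ L : ℝ, 0 ≤ L → (∀ x y, |Wbar x - Wbar y| ≤ L * dist x y) →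
      ∀ x y : SL, |Wbar x - Wbar y| ≤ KR * dist x y + γ * (L * (KP * dist x y)) := by
    intro L hL0 hLf x y
    have hw := wass_dual (fun x' => ∑ a, ρ x a * Pbar x a x')
      (fun x' => ∑ a, ρ y a * Pbar y a x') (hmix0 x) (hmix1 x) (hmix0 y) (hmix1 y)
      Wbar L hL0 hLf
    have hw2 : |(∑ x', (∑ a, ρ x a * Pbar x a x') * Wbar x')
        - ∑ x', (∑ a, ρ y a * Pbar y a x') * Wbar x'| ≤ L * (KP * dist x y) := by
      refine hw.trans ?_
      exact mul_le_mul_of_nonneg_left (hLipP x y) hL0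
    have hr := hLipR x y
    have e1 := hdec x
    have e2 := hdec y
    have : Wbar x - Wbar y = ((∑ a, ρ x a * Rbar x a) - ∑ a, ρ y a * Rbar y a)
        + γ * ((∑ x', (∑ a, ρ x a * Pbar x a x') * Wbar x')
          - ∑ x', (∑ a, ρ y a * Pbar y a x') * Wbar x') := by
      rw [e1, e2]; ring
    rw [this]
    calc _ ≤ |(∑ a, ρ x a * Rbar x a) - ∑ a, ρ y a * Rbar y a|
          + |γ * ((∑ x', (∑ a, ρ x a * Pbar x a x') * Wbar x')
            - ∑ x', (∑ a, ρ y a * Pbar y a x') * Wbar x')| := abs_add_le _ _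
      _ ≤ KR * dist x y + γ * (L * (KP * dist x y)) := by
          rw [abs_mul, abs_of_pos hγ0]
          exact add_le_add hr (mul_le_mul_of_nonneg_left hw2 hγ0.le)
  by_cases hpe : (Finset.univ.filter (fun p : SL × SL => p.1 ≠ p.2)).Nonempty
  · set L : ℝ := (Finset.univ.filter (fun p : SL × SL => p.1 ≠ p.2)).sup' hpe
      (fun p => |Wbar p.1 - Wbar p.2| / dist p.1 p.2) with hLdef
    have hL0 : 0 ≤ L := by
      obtain ⟨p, hp⟩ := hpe
      exact le_trans (div_nonneg (abs_nonneg _) dist_nonneg)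
        (Finset.le_sup' (fun p : SL × SL => |Wbar p.1 - Wbar p.2| / dist p.1 p.2) hp)
    have hLf : ∀ x y, |Wbar x - Wbar y| ≤ L * dist x y := by
      intro x y
      by_cases hxy : x = y
      · simp [hxy]
      · have hd : 0 < dist x y := dist_pos.2 hxy
        have hmem : (x, y) ∈ Finset.univ.filter (fun p : SL × SL => p.1 ≠ p.2) := by
          simp [hxy]
        have := Finset.le_sup' (fun p : SL × SL => |Wbar p.1 - Wbar p.2| / dist p.1 p.2) hmem
        calc |Wbar x - Wbar y| = (|Wbar x - Wbar y| / dist x y) * dist x y := by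
              field_simp
          _ ≤ L * dist x y := mul_le_mul_of_nonneg_right this dist_nonneg
    -- show L ≤ KR/(1-γKP)
    obtain ⟨p, hp, hpeq⟩ := Finset.exists_mem_eq_sup' hpe
      (fun p : SL × SL => |Wbar p.1 - Wbar p.2| / dist p.1 p.2)
    have hpne : p.1 ≠ p.2 := (Finset.mem_filter.1 hp).2
    have hd : 0 < dist p.1 p.2 := dist_pos.2 hpne
    have h1 : |Wbar p.1 - Wbar p.2| ≤ (KR + γ * (L * KP)) * dist p.1 p.2 := by
      have := hstep L hL0 hLf p.1 p.2
      calc |Wbar p.1 - Wbar p.2| ≤ KR * dist p.1 p.2 + γ * (L * (KP * dist p.1 p.2)) := this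
        _ = (KR + γ * (L * KP)) * dist p.1 p.2 := by ring
    have hLle : L ≤ KR + γ * (L * KP) := by
      have h2 : L * dist p.1 p.2 ≤ (KR + γ * (L * KP)) * dist p.1 p.2 := by
        have hLeq : L = |Wbar p.1 - Wbar p.2| / dist p.1 p.2 := hLdef.trans hpeq
        have heq : L * dist p.1 p.2 = |Wbar p.1 - Wbar p.2| := by
          rw [hLeq]; field_simp
        rw [heq]; exact h1
      exact le_of_mul_le_mul_right h2 hd
    have hLKV : L ≤ KR / (1 - γ * KP) := by
      rw [le_div_iff₀ hden]
      nlinarith [hLle]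
    intro x y
    exact (hLf x y).trans (mul_le_mul_of_nonneg_right hLKV dist_nonneg)
  · intro x y
    have hxy : x = y := by
      by_contra hxy
      exact hpe ⟨(x, y), by simp [hxy]⟩
    simp [hxy, mul_nonneg (div_nonneg hKR0 hden.le) dist_nonneg]

lemma key_bound [MetricSpace SL] [DecidableEq SL]
    (P : S → A → S → ℝ)
    (hP : ∀ s a, (∀ s', 0 ≤ P s a s') ∧ (∑ s', P s a s') = 1)
    (R : S → A → ℝ) (γ : ℝ) (hγ0 : 0 < γ)
    (Pbar : SL → A → SL → ℝ)
    (hPbar : ∀ x a, (∀ x', 0 ≤ Pbar x a x') ∧ (∑ x', Pbar x a x') = 1)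
    (Rbar : SL → A → ℝ) (φ : S → SL)
    (ρ : SL → A → ℝ) (hρ : ∀ x, (∀ a, 0 ≤ ρ x a) ∧ (∑ a, ρ x a) = 1)
    (πb : S → A → ℝ)
    (D' : ℝ) (hD'0 : 0 < D') (hγD : γ * D' < 1)
    (hdom : ∀ s a, ρ (φ s) a ≤ D' * πb s a)
    (sI sreset : S)
    (hepisR : ∀ a, R sreset a = 0)
    (hepisP : ∀ a, P sreset a sI = 1)
    (hepisRbar : ∀ a, Rbar (φ sreset) a = 0)
    (hepisPbar : ∀ a, Pbar (φ sreset) a (φ sI) = 1)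
    (ξ : S → ℝ) (hξ0 : ∀ s, 0 ≤ ξ s)
    (hstat : ∀ s', (∑ s, ∑ a, ξ s * πb s a * P s a s') = ξ s')
    (hξreset : 0 < ξ sreset)
    (KR KP : ℝ) (hKR0 : 0 ≤ KR) (hKPγ : γ * KP < 1)
    (hLipR : ∀ x₁ x₂ : SL,
      |(∑ a, ρ x₁ a * Rbar x₁ a) - (∑ a, ρ x₂ a * Rbar x₂ a)| ≤ KR * dist x₁ x₂)
    (hLipP : ∀ x₁ x₂ : SL,
      Wass (fun x' => ∑ a, ρ x₁ a * Pbar x₁ a x')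
        (fun x' => ∑ a, ρ x₂ a * Pbar x₂ a x') ≤ KP * dist x₁ x₂)
    (KV : ℝ) (hKV : KV = KR / (1 - γ * KP))
    (Wv : S → ℝ)
    (hWv : ∀ s, Wv s = ∑ a, ρ (φ s) a * (R s a + γ * ∑ s', P s a s' * Wv s'))
    (Wbar : SL → ℝ)
    (hWbar : ∀ x, Wbar x = ∑ a, ρ x a * (Rbar x a + γ * ∑ x', Pbar x a x' * Wbar x'))
    (LR LP : ℝ)
    (hLR : LR = ∑ s, ∑ a, ξ s * πb s a * |R s a - Rbar (φ s) a|)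
    (hLP : LP = ∑ s, ∑ a, ξ s * πb s a *
      Wass (fun x => ∑ s', if φ s' = x then P s a s' else 0) (Pbar (φ s) a)) :
    |Wv sI - Wbar (φ sI)| ≤ (1 / ξ sreset) * (LR / γ + KV * LP) * (1 / (1 / D' - γ)) := by
  classical
  have hden : 0 < 1 - γ * KP := by linarith
  have hKV0 : 0 ≤ KV := hKV ▸ div_nonneg hKR0 hden.le
  have hlip : ∀ x y, |Wbar x - Wbar y| ≤ KV * dist x y := by
    intro x y; rw [hKV]
    exact value_lipschitz Pbar hPbar Rbar γ hγ0 ρ hρ KR KP hKR0 hKPγ hLipR hLipP Wbar hWbar x y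
  set E : S → ℝ := fun s => |Wv s - Wbar (φ s)| with hE
  have hE0 : ∀ s, 0 ≤ E s := fun s => abs_nonneg _
  set push : S → A → SL → ℝ := fun s a x => ∑ s', if φ s' = x then P s a s' else 0 with hpush
  have hpush0 : ∀ s a x, 0 ≤ push s a x := by
    intro s a x
    exact Finset.sum_nonneg fun s' _ => by
      by_cases h : φ s' = x <;> simp [h, (hP s a).1 s']
  have hpush1 : ∀ s a, ∑ x, push s a x = 1 := by
    intro s a
    show ∑ x, ∑ s', (if φ s' = x then P s a s' else 0) = 1
    rw [Finset.sum_comm]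
    calc ∑ s', ∑ x, (if φ s' = x then P s a s' else 0) = ∑ s', P s a s' := by
          refine Finset.sum_congr rfl fun s' _ => ?_
          simp [Finset.sum_ite_eq]
      _ = 1 := (hP s a).2
  have hpushW : ∀ s a (W : SL → ℝ), ∑ x, push s a x * W x = ∑ s', P s a s' * W (φ s') := by
    intro s a W
    show ∑ x, (∑ s', if φ s' = x then P s a s' else 0) * W x = _
    calc ∑ x, (∑ s', if φ s' = x then P s a s' else 0) * W x
        = ∑ x, ∑ s', (if φ s' = x then P s a s' * W x else 0) := by
          refine Finset.sum_congr rfl fun x _ => ?_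
          rw [Finset.sum_mul]
          exact Finset.sum_congr rfl fun s' _ => by by_cases h : φ s' = x <;> simp [h]
      _ = ∑ s', ∑ x, (if φ s' = x then P s a s' * W x else 0) := Finset.sum_comm
      _ = ∑ s', P s a s' * W (φ s') := by
          refine Finset.sum_congr rfl fun s' _ => ?_
          simp [Finset.sum_ite_eq]
  -- pointwise bound
  have hpoint : ∀ s, E s ≤ ∑ a, ρ (φ s) a * (|R s a - Rbar (φ s) a|
      + γ * ∑ s', P s a s' * E s'
      + γ * (KV * Wass (push s a) (Pbar (φ s) a))) := by
    intro s
    have hid : Wv s - Wbar (φ s) = ∑ a, ρ (φ s) a * ((R s a - Rbar (φ s) a)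
        + γ * (∑ s', P s a s' * (Wv s' - Wbar (φ s')))
        + γ * ((∑ x, push s a x * Wbar x) - ∑ x, Pbar (φ s) a x * Wbar x)) := by
      rw [hWv s, hWbar (φ s), ← Finset.sum_sub_distrib]
      refine Finset.sum_congr rfl fun a _ => ?_
      rw [← mul_sub]
      congr 1
      rw [hpushW s a Wbar]
      have h3 : ∑ s', P s a s' * (Wv s' - Wbar (φ s'))
          = (∑ s', P s a s' * Wv s') - ∑ s', P s a s' * Wbar (φ s') := by
        rw [← Finset.sum_sub_distrib]
        exact Finset.sum_congr rfl fun s' _ => mul_sub _ _ _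
      rw [h3]; ring
    have : E s = |Wv s - Wbar (φ s)| := rfl
    rw [this, hid]
    calc |∑ a, ρ (φ s) a * ((R s a - Rbar (φ s) a)
          + γ * (∑ s', P s a s' * (Wv s' - Wbar (φ s')))
          + γ * ((∑ x, push s a x * Wbar x) - ∑ x, Pbar (φ s) a x * Wbar x))|
        ≤ ∑ a, |ρ (φ s) a * ((R s a - Rbar (φ s) a)
          + γ * (∑ s', P s a s' * (Wv s' - Wbar (φ s')))
          + γ * ((∑ x, push s a x * Wbar x) - ∑ x, Pbar (φ s) a x * Wbar x))| :=
          Finset.abs_sum_le_sum_abs _ _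
      _ ≤ ∑ a, ρ (φ s) a * (|R s a - Rbar (φ s) a|
          + γ * ∑ s', P s a s' * E s'
          + γ * (KV * Wass (push s a) (Pbar (φ s) a))) := by
          refine Finset.sum_le_sum fun a _ => ?_
          rw [abs_mul, abs_of_nonneg ((hρ (φ s)).1 a)]
          refine mul_le_mul_of_nonneg_left ?_ ((hρ (φ s)).1 a)
          have b1 : |γ * (∑ s', P s a s' * (Wv s' - Wbar (φ s')))|
              ≤ γ * ∑ s', P s a s' * E s' := by
            rw [abs_mul, abs_of_pos hγ0]
            refine mul_le_mul_of_nonneg_left ?_ hγ0.le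
            calc |∑ s', P s a s' * (Wv s' - Wbar (φ s'))|
                ≤ ∑ s', |P s a s' * (Wv s' - Wbar (φ s'))| := Finset.abs_sum_le_sum_abs _ _
              _ = ∑ s', P s a s' * E s' := by
                  refine Finset.sum_congr rfl fun s' _ => ?_
                  rw [abs_mul, abs_of_nonneg ((hP s a).1 s')]
          have b2 : |γ * ((∑ x, push s a x * Wbar x) - ∑ x, Pbar (φ s) a x * Wbar x)|
              ≤ γ * (KV * Wass (push s a) (Pbar (φ s) a)) := by
            rw [abs_mul, abs_of_pos hγ0]
            refine mul_le_mul_of_nonneg_left ?_ hγ0.le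
            exact wass_dual (push s a) (Pbar (φ s) a) (hpush0 s a) (hpush1 s a)
              ((hPbar (φ s) a).1) ((hPbar (φ s) a).2) Wbar KV hKV0 hlip
          calc |(R s a - Rbar (φ s) a)
              + γ * (∑ s', P s a s' * (Wv s' - Wbar (φ s')))
              + γ * ((∑ x, push s a x * Wbar x) - ∑ x, Pbar (φ s) a x * Wbar x)|
              ≤ |R s a - Rbar (φ s) a|
              + |γ * (∑ s', P s a s' * (Wv s' - Wbar (φ s')))|
              + |γ * ((∑ x, push s a x * Wbar x) - ∑ x, Pbar (φ s) a x * Wbar x)| :=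
                abs_add_three _ _ _
            _ ≤ _ := by
                exact add_le_add (add_le_add le_rfl b1) b2
  -- nonnegativity of the per-(s,a) bound
  set G : S → A → ℝ := fun s a => |R s a - Rbar (φ s) a|
      + γ * ∑ s', P s a s' * E s'
      + γ * (KV * Wass (push s a) (Pbar (φ s) a)) with hG
  have hG0 : ∀ s a, 0 ≤ G s a := by
    intro s a
    have n1 : (0:ℝ) ≤ |R s a - Rbar (φ s) a| := abs_nonneg _
    have n2 : (0:ℝ) ≤ ∑ s', P s a s' * E s' :=
      Finset.sum_nonneg fun s' _ => mul_nonneg ((hP s a).1 s') (hE0 s')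
    have n3 : (0:ℝ) ≤ Wass (push s a) (Pbar (φ s) a) := wass_nonneg _ _
    have := mul_nonneg hγ0.le n2
    have := mul_nonneg hγ0.le (mul_nonneg hKV0 n3)
    simp only [hG]
    linarith
  -- the statistical (weighted) bound
  have hPE : (∑ s, ∑ a, ξ s * πb s a * ∑ s', P s a s' * E s') = ∑ s', ξ s' * E s' := by
    calc (∑ s, ∑ a, ξ s * πb s a * ∑ s', P s a s' * E s')
        = ∑ s, ∑ a, ∑ s', ξ s * πb s a * P s a s' * E s' := by
          refine Finset.sum_congr rfl fun s _ => Finset.sum_congr rfl fun a _ => ?_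
          rw [Finset.mul_sum]
          exact Finset.sum_congr rfl fun s' _ => by ring
      _ = ∑ s, ∑ s', ∑ a, ξ s * πb s a * P s a s' * E s' :=
          Finset.sum_congr rfl fun s _ => Finset.sum_comm
      _ = ∑ s', ∑ s, ∑ a, ξ s * πb s a * P s a s' * E s' := Finset.sum_comm
      _ = ∑ s', (∑ s, ∑ a, ξ s * πb s a * P s a s') * E s' := by
          refine Finset.sum_congr rfl fun s' _ => ?_
          rw [Finset.sum_mul]
          exact Finset.sum_congr rfl fun s _ => by rw [Finset.sum_mul]
      _ = ∑ s', ξ s' * E s' := by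
          exact Finset.sum_congr rfl fun s' _ => by rw [hstat s']
  have hsum : (∑ s, ξ s * E s) ≤ D' * (LR + γ * KV * LP) + γ * D' * ∑ s, ξ s * E s := by
    have h1 : (∑ s, ξ s * E s) ≤ ∑ s, ξ s * ∑ a, ρ (φ s) a * G s a :=
      Finset.sum_le_sum fun s _ => mul_le_mul_of_nonneg_left (hpoint s) (hξ0 s)
    have h2 : (∑ s, ξ s * ∑ a, ρ (φ s) a * G s a)
        ≤ ∑ s, ξ s * ∑ a, (D' * πb s a) * G s a := by
      refine Finset.sum_le_sum fun s _ => mul_le_mul_of_nonneg_left ?_ (hξ0 s)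
      exact Finset.sum_le_sum fun a _ => mul_le_mul_of_nonneg_right (hdom s a) (hG0 s a)
    have h3 : (∑ s, ξ s * ∑ a, (D' * πb s a) * G s a)
        = D' * ∑ s, ∑ a, ξ s * πb s a * G s a := by
      rw [Finset.mul_sum]
      refine Finset.sum_congr rfl fun s _ => ?_
      rw [Finset.mul_sum, Finset.mul_sum]
      exact Finset.sum_congr rfl fun a _ => by ring
    have h4 : (∑ s, ∑ a, ξ s * πb s a * G s a)
        = LR + γ * (∑ s, ∑ a, ξ s * πb s a * ∑ s', P s a s' * E s') + γ * KV * LP := by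
      have expand : ∀ s a, ξ s * πb s a * G s a
          = ξ s * πb s a * |R s a - Rbar (φ s) a|
          + γ * (ξ s * πb s a * ∑ s', P s a s' * E s')
          + γ * KV * (ξ s * πb s a * Wass (push s a) (Pbar (φ s) a)) := by
        intro s a; simp only [hG]; ring
      calc (∑ s, ∑ a, ξ s * πb s a * G s a)
          = ∑ s, ∑ a, (ξ s * πb s a * |R s a - Rbar (φ s) a|
            + γ * (ξ s * πb s a * ∑ s', P s a s' * E s')
            + γ * KV * (ξ s * πb s a * Wass (push s a) (Pbar (φ s) a))) :=
            Finset.sum_congr rfl fun s _ => Finset.sum_congr rfl fun a _ => expand s a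
        _ = (∑ s, ∑ a, ξ s * πb s a * |R s a - Rbar (φ s) a|)
            + γ * (∑ s, ∑ a, ξ s * πb s a * ∑ s', P s a s' * E s')
            + γ * KV * (∑ s, ∑ a, ξ s * πb s a * Wass (push s a) (Pbar (φ s) a)) := by
            simp only [Finset.sum_add_distrib, ← Finset.mul_sum]
        _ = LR + γ * (∑ s, ∑ a, ξ s * πb s a * ∑ s', P s a s' * E s') + γ * KV * LP := by
            rw [hLR, hLP]
    have h5 : LR + γ * (∑ s, ∑ a, ξ s * πb s a * ∑ s', P s a s' * E s') + γ * KV * LP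
        = LR + γ * KV * LP + γ * ∑ s, ξ s * E s := by
      rw [hPE]; ring
    calc (∑ s, ξ s * E s) ≤ ∑ s, ξ s * ∑ a, (D' * πb s a) * G s a := le_trans h1 h2
      _ = D' * (LR + γ * KV * LP + γ * ∑ s, ξ s * E s) := by rw [h3, h4, h5]
      _ = D' * (LR + γ * KV * LP) + γ * D' * ∑ s, ξ s * E s := by ring
  have hdenD : 0 < 1 - γ * D' := by linarith
  have hT : (∑ s, ξ s * E s) ≤ D' * (LR + γ * KV * LP) / (1 - γ * D') := by
    rw [le_div_iff₀ hdenD]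
    nlinarith [hsum]
  -- reset-state relations
  have hPW : ∀ a (W : S → ℝ), ∑ s', P sreset a s' * W s' = W sI := by
    intro a W
    have hP0 : ∀ s', s' ≠ sI → P sreset a s' = 0 := by
      intro s' hs'
      have hzero : ∑ s'' ∈ Finset.univ.erase sI, P sreset a s'' = 0 := by
        have h := Finset.sum_erase_add Finset.univ (P sreset a) (Finset.mem_univ sI)
        rw [(hP sreset a).2, hepisP a] at h
        linarith
      exact (Finset.sum_eq_zero_iff_of_nonneg
        (fun s'' _ => (hP sreset a).1 s'')).1 hzero s'
        (Finset.mem_erase.2 ⟨hs', Finset.mem_univ s'⟩)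
    rw [Finset.sum_eq_single sI (fun s' _ h => by rw [hP0 s' h, zero_mul])
      (fun h => absurd (Finset.mem_univ sI) h), hepisP a, one_mul]
  have hPbarW : ∀ a (W : SL → ℝ), ∑ x', Pbar (φ sreset) a x' * W x' = W (φ sI) := by
    intro a W
    have hP0 : ∀ x', x' ≠ φ sI → Pbar (φ sreset) a x' = 0 := by
      intro x' hx'
      have hzero : ∑ x'' ∈ Finset.univ.erase (φ sI), Pbar (φ sreset) a x'' = 0 := by
        have h := Finset.sum_erase_add Finset.univ (Pbar (φ sreset) a)
          (Finset.mem_univ (φ sI))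
        rw [(hPbar (φ sreset) a).2, hepisPbar a] at h
        linarith
      exact (Finset.sum_eq_zero_iff_of_nonneg
        (fun x'' _ => (hPbar (φ sreset) a).1 x'')).1 hzero x'
        (Finset.mem_erase.2 ⟨hx', Finset.mem_univ x'⟩)
    rw [Finset.sum_eq_single (φ sI) (fun x' _ h => by rw [hP0 x' h, zero_mul])
      (fun h => absurd (Finset.mem_univ (φ sI)) h), hepisPbar a, one_mul]
  have hreset1 : Wv sreset = γ * Wv sI := by
    rw [hWv sreset]
    calc ∑ a, ρ (φ sreset) a * (R sreset a + γ * ∑ s', P sreset a s' * Wv s')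
        = ∑ a, ρ (φ sreset) a * (γ * Wv sI) := by
          refine Finset.sum_congr rfl fun a _ => ?_
          rw [hepisR a, hPW a Wv, zero_add]
      _ = γ * Wv sI := by rw [← Finset.sum_mul, (hρ (φ sreset)).2, one_mul]
  have hreset2 : Wbar (φ sreset) = γ * Wbar (φ sI) := by
    rw [hWbar (φ sreset)]
    calc ∑ a, ρ (φ sreset) a * (Rbar (φ sreset) a + γ * ∑ x', Pbar (φ sreset) a x' * Wbar x')
        = ∑ a, ρ (φ sreset) a * (γ * Wbar (φ sI)) := by
          refine Finset.sum_congr rfl fun a _ => ?_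
          rw [hepisRbar a, hPbarW a Wbar, zero_add]
      _ = γ * Wbar (φ sI) := by rw [← Finset.sum_mul, (hρ (φ sreset)).2, one_mul]
  have hEr : E sreset = γ * E sI := by
    show |Wv sreset - Wbar (φ sreset)| = γ * |Wv sI - Wbar (φ sI)|
    rw [hreset1, hreset2, ← mul_sub, abs_mul, abs_of_pos hγ0]
  have hsingle : ξ sreset * E sreset ≤ ∑ s, ξ s * E s :=
    Finset.single_le_sum (fun s _ => mul_nonneg (hξ0 s) (hE0 s)) (Finset.mem_univ sreset)
  -- conclude
  have hmain : γ * (ξ sreset * E sI) ≤ D' * (LR + γ * KV * LP) / (1 - γ * D') := by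
    have : γ * (ξ sreset * E sI) = ξ sreset * E sreset := by rw [hEr]; ring
    rw [this]
    exact hsingle.trans hT
  have hEineq : E sI ≤ D' * (LR + γ * KV * LP) / (1 - γ * D') / (γ * ξ sreset) := by
    rw [le_div_iff₀ (mul_pos hγ0 hξreset)]
    calc E sI * (γ * ξ sreset) = γ * (ξ sreset * E sI) := by ring
      _ ≤ _ := hmain
  have hrw : D' * (LR + γ * KV * LP) / (1 - γ * D') / (γ * ξ sreset)
      = (1 / ξ sreset) * (LR / γ + KV * LP) * (1 / (1 / D' - γ)) := by
    have hD'ne : D' ≠ 0 := hD'0.ne'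
    have hγne : γ ≠ 0 := hγ0.ne'
    have hξne : ξ sreset ≠ 0 := hξreset.ne'
    have h1 : (1:ℝ) / D' - γ = (1 - γ * D') / D' := by field_simp
    rw [h1]
    rw [one_div_div]
    field_simp
  show E sI ≤ _
  rw [← hrw]
  exact hEineq

/-- Theorem 3, Deep Safe Policy Improvement:
`J(π̄∘φ) − J(π_b) ≥ J̄(π̄) − J̄(π̄_b) − ζ`, where the modeling-error term `ζ`
is expressed through the local reward and transition losses. -/
theorem deep_safe_policy_improvement
    [Nonempty S] [Nonempty A] [Nonempty SL] [MetricSpace SL] [DecidableEq SL]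
    (P : S → A → S → ℝ)
    (hP : ∀ s a, (∀ s', 0 ≤ P s a s') ∧ (∑ s', P s a s') = 1)
    (R : S → A → ℝ) (γ : ℝ) (hγ : 1 / 2 < γ ∧ γ < 1)
    (Pbar : SL → A → SL → ℝ)
    (hPbar : ∀ x a, (∀ x', 0 ≤ Pbar x a x') ∧ (∑ x', Pbar x a x') = 1)
    (Rbar : SL → A → ℝ)
    (φ : S → SL)
    (πbar πbarb : SL → A → ℝ) (hπbar : IsPolicy πbar) (hπbarb : IsPolicy πbarb)
    (πb : S → A → ℝ) (hπbdef : ∀ s a, πb s a = πbarb (φ s) a)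
    (C : ℝ) (hC : 1 < C ∧ C < 1 / γ)
    (hmem : InNbhd C πb (fun s a => πbar (φ s) a))
    (hne : ((Finset.univ : Finset (S × A)).filter (fun p => 0 < πb p.1 p.2)).Nonempty)
    (D : ℝ)
    (hD : D = ((Finset.univ : Finset (S × A)).filter (fun p => 0 < πb p.1 p.2)).sup' hne
      (fun p => πbar (φ p.1) p.2 / πb p.1 p.2))
    (sI sreset : S)
    (hepisR : ∀ a, R sreset a = 0)
    (hepisP : ∀ a, P sreset a sI = 1)
    (hepisRbar : ∀ a, Rbar (φ sreset) a = 0)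
    (hepisPbar : ∀ a, Pbar (φ sreset) a (φ sI) = 1)
    (hφreset : ∀ s, φ s = φ sreset ↔ s = sreset)
    (ξ : S → ℝ) (hξ : (∀ s, 0 ≤ ξ s) ∧ (∑ s, ξ s) = 1)
    (hstat : ∀ s', (∑ s, ∑ a, ξ s * πb s a * P s a s') = ξ s')
    (hξreset : 0 < ξ sreset)
    (KR KP : ℝ) (hKR0 : 0 ≤ KR) (hKP0 : 0 ≤ KP) (hKP : KP < 1 / γ)
    (hLipR : ∀ x₁ x₂ : SL,
      |(∑ a, πbar x₁ a * Rbar x₁ a) - (∑ a, πbar x₂ a * Rbar x₂ a)| ≤ KR * dist x₁ x₂)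
    (hLipP : ∀ x₁ x₂ : SL,
      Wass (fun x' => ∑ a, πbar x₁ a * Pbar x₁ a x')
        (fun x' => ∑ a, πbar x₂ a * Pbar x₂ a x') ≤ KP * dist x₁ x₂)
    (hLipRb : ∀ x₁ x₂ : SL,
      |(∑ a, πbarb x₁ a * Rbar x₁ a) - (∑ a, πbarb x₂ a * Rbar x₂ a)| ≤ KR * dist x₁ x₂)
    (hLipPb : ∀ x₁ x₂ : SL,
      Wass (fun x' => ∑ a, πbarb x₁ a * Pbar x₁ a x')
        (fun x' => ∑ a, πbarb x₂ a * Pbar x₂ a x') ≤ KP * dist x₁ x₂)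
    (KV : ℝ) (hKV : KV = KR / (1 - γ * KP))
    (V Vb : S → ℝ)
    (hV : ∀ s, V s = ∑ a, πbar (φ s) a * (R s a + γ * ∑ s', P s a s' * V s'))
    (hVb : ∀ s, Vb s = ∑ a, πb s a * (R s a + γ * ∑ s', P s a s' * Vb s'))
    (Vbar Vbarb : SL → ℝ)
    (hVbar : ∀ x, Vbar x = ∑ a, πbar x a * (Rbar x a + γ * ∑ x', Pbar x a x' * Vbar x'))
    (hVbarb : ∀ x, Vbarb x = ∑ a, πbarb x a * (Rbar x a + γ * ∑ x', Pbar x a x' * Vbarb x'))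
    (LR LP : ℝ)
    (hLR : LR = ∑ s, ∑ a, ξ s * πb s a * |R s a - Rbar (φ s) a|)
    (hLP : LP = ∑ s, ∑ a, ξ s * πb s a *
      Wass (fun x => ∑ s', if φ s' = x then P s a s' else 0) (Pbar (φ s) a))
    (ζ : ℝ)
    (hζ : ζ = (1 / ξ sreset) * (LR / γ + KV * LP) *
      (1 / (1 / D - γ) + 1 / (1 - γ))) :
    V sI - Vb sI ≥ Vbar (φ sI) - Vbarb (φ sI) - ζ := by
  obtain ⟨hγhalf, hγ1⟩ := hγ
  have hγ0 : 0 < γ := by linarith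
  have hγinv2 : 1 / γ < 2 := by rw [div_lt_iff₀ hγ0]; linarith
  have hC2 : C < 2 := lt_trans hC.2 hγinv2
  have hπb : IsPolicy πb := by
    intro s
    refine ⟨fun a => ?_, ?_⟩
    · rw [hπbdef]; exact (hπbarb (φ s)).1 a
    · calc ∑ a, πb s a = ∑ a, πbarb (φ s) a :=
            Finset.sum_congr rfl fun a _ => hπbdef s a
        _ = 1 := (hπbarb (φ s)).2
  have hKPγ : γ * KP < 1 := by
    have := (lt_div_iff₀ hγ0).1 hKP
    nlinarith
  have hDub : D ≤ C := by
    rw [hD]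
    apply Finset.sup'_le
    intro p hp
    exact (hmem.2.2 p.1 p.2 (Finset.mem_filter.1 hp).2).2
  have hDlb : 2 - C ≤ D := by
    obtain ⟨p, hp⟩ := hne
    rw [hD]
    exact le_trans (hmem.2.2 p.1 p.2 (Finset.mem_filter.1 hp).2).1
      (Finset.le_sup' (fun p : S × A => πbar (φ p.1) p.2 / πb p.1 p.2) hp)
  have hD0 : 0 < D := lt_of_lt_of_le (by linarith) hDlb
  have hγD : γ * D < 1 := by
    have hγC : C * γ < 1 := (lt_div_iff₀ hγ0).1 hC.2
    nlinarith
  have hdom1 : ∀ s a, πbar (φ s) a ≤ D * πb s a := by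
    intro s a
    by_cases h : 0 < πb s a
    · have hp : (s, a) ∈ (Finset.univ : Finset (S × A)).filter
          (fun p => 0 < πb p.1 p.2) := Finset.mem_filter.2 ⟨Finset.mem_univ _, h⟩
      have hle := Finset.le_sup' (fun p : S × A => πbar (φ p.1) p.2 / πb p.1 p.2) hp
      have h2 : πbar (φ s) a / πb s a ≤ D := by rw [hD]; exact hle
      calc πbar (φ s) a = (πbar (φ s) a / πb s a) * πb s a := by field_simp
        _ ≤ D * πb s a := mul_le_mul_of_nonneg_right h2 h.le
    · have hb0 : πb s a = 0 := le_antisymm (not_lt.1 h) ((hπb s).1 a)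
      have hn : ¬ 0 < πbar (φ s) a := fun hpos => h ((hmem.2.1 s a).mpr hpos)
      have hπ'0 : πbar (φ s) a = 0 := le_antisymm (not_lt.1 hn) ((hmem.1 s).1 a)
      rw [hπ'0, hb0, mul_zero]
  have hdom2 : ∀ s a, πbarb (φ s) a ≤ 1 * πb s a := by
    intro s a; rw [one_mul, hπbdef]
  have hVb' : ∀ s, Vb s = ∑ a, πbarb (φ s) a * (R s a + γ * ∑ s', P s a s' * Vb s') := by
    intro s
    rw [hVb s]
    exact Finset.sum_congr rfl fun a _ => by rw [hπbdef]
  have h1 := key_bound P hP R γ hγ0 Pbar hPbar Rbar φ πbar hπbar πb D hD0 hγD hdom1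
    sI sreset hepisR hepisP hepisRbar hepisPbar ξ hξ.1 hstat hξreset KR KP hKR0 hKPγ
    hLipR hLipP KV hKV V hV Vbar hVbar LR LP hLR hLP
  have h2 := key_bound P hP R γ hγ0 Pbar hPbar Rbar φ πbarb hπbarb πb 1 one_pos
    (by linarith) hdom2
    sI sreset hepisR hepisP hepisRbar hepisPbar ξ hξ.1 hstat hξreset KR KP hKR0 hKPγ
    hLipRb hLipPb KV hKV Vb hVb' Vbarb hVbarb LR LP hLR hLP
  have heq : (1 / ξ sreset) * (LR / γ + KV * LP) * (1 / (1 / (1:ℝ) - γ))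
      = (1 / ξ sreset) * (LR / γ + KV * LP) * (1 / (1 - γ)) := by norm_num
  have h2' : |Vb sI - Vbarb (φ sI)|
      ≤ (1 / ξ sreset) * (LR / γ + KV * LP) * (1 / (1 - γ)) := h2.trans_eq heq
  have hζ' : ζ = (1 / ξ sreset) * (LR / γ + KV * LP) * (1 / (1 / D - γ))
      + (1 / ξ sreset) * (LR / γ + KV * LP) * (1 / (1 - γ)) := by rw [hζ]; ring
  have e1 := abs_le.1 h1
  have e2 := abs_le.1 h2'
  rw [ge_iff_le, hζ']
  linarith [e1.1, e1.2, e2.1, e2.2]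
end
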